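/- arXiv:1604.04474 — 3 statements merged into one kernel-verified Lean document; each statement's English description precedes it below -/
import Mathlib

section
/- If a finitely presented group G = ⟨x₁,…,xₙ | R₁,…,Rₘ⟩ has solvable word problem, then the Mihailova subgroup A = {(x,y) ∈ Fₙ × Fₙ : x =_G y} is finitely generated by the elements (1, R₁),…,(1, Rₘ), (x₁, x₁),…,(xₙ, xₙ). -/
/-! The pairs `(xᵢ, xᵢ)` generate the whole diagonal of `Fₙ × Fₙ`. Conjugating by the diagonal
shows that `{w | (1, w) ∈ ⟨(1, Rⱼ), (xᵢ, xᵢ)⟩}` is a normal subgroup; it contains the relators,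
hence their normal closure `ker π`. Any `(x, y)` with `π x = π y` then factors as
`(x, x) * (1, x⁻¹ y)`. -/

open Subgroup

variable {G Q ι κ : Type*} [Group G] [Group Q]

abbrev mihailovaSubgroup (R : ι → G) (x : κ → G) : Subgroup (G × G) :=
  closure ((Set.range fun j => ((1 : G), R j)) ∪ Set.range fun i => (x i, x i))

variable (R : ι → G) (x : κ → G)

theorem diag_mem_mihailovaSubgroup (hx : closure (Set.range x) = ⊤) (g : G) :
    (g, g) ∈ mihailovaSubgroup R x := by
  let diag : G →* G × G := (MonoidHom.id G).prod (MonoidHom.id G)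
  have hmap : (closure (Set.range x)).map diag ≤ mihailovaSubgroup R x := by
    rw [MonoidHom.map_closure, ← Set.range_comp]
    exact closure_mono Set.subset_union_right
  exact hmap ⟨g, hx ▸ mem_top g, rfl⟩

theorem one_prod_mem_mihailovaSubgroup (hx : closure (Set.range x) = ⊤) {w : G}
    (hw : w ∈ normalClosure (Set.range R)) : ((1 : G), w) ∈ mihailovaSubgroup R x := by
  let T := (mihailovaSubgroup R x).comap (MonoidHom.inr G G)
  have hT : T.Normal := ⟨fun w hw g => by
    simpa [T] using mul_mem (mul_mem (diag_mem_mihailovaSubgroup R x hx g) hw)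
      (inv_mem (diag_mem_mihailovaSubgroup R x hx g))⟩
  have hRT : Set.range R ⊆ T := by
    rintro _ ⟨j, rfl⟩
    exact subset_closure (Or.inl ⟨j, rfl⟩)
  exact normalClosure_le_normal hRT hw

theorem mihailovaSubgroup_eq_eqLocus (π : G →* Q) (hπ : π.ker = normalClosure (Set.range R))
    (hx : closure (Set.range x) = ⊤) :
    mihailovaSubgroup R x =
      MonoidHom.eqLocus (π.comp (MonoidHom.fst G G)) (π.comp (MonoidHom.snd G G)) := by
  apply le_antisymm
  · rw [closure_le]
    rintro _ (⟨j, rfl⟩ | ⟨i, rfl⟩)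
    · have hRj : R j ∈ π.ker := hπ ▸ subset_normalClosure ⟨j, rfl⟩
      exact (map_one π).trans hRj.symm
    · rfl
  · rintro ⟨a, b⟩ (hab : π a = π b)
    have hker : a⁻¹ * b ∈ π.ker := by simp [hab]
    have hab' := mul_mem (diag_mem_mihailovaSubgroup R x hx a)
      (one_prod_mem_mihailovaSubgroup R x hx (hπ ▸ hker))
    rwa [Prod.mk_mul_mk, mul_one, mul_inv_cancel_left] at hab'

theorem stmt5_general (n m : ℕ) (R : Fin m → FreeGroup (Fin n)) :
    (Subgroup.closure
        ((Set.range fun j : Fin m => ((1 : FreeGroup (Fin n)), R j)) ∪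
         (Set.range fun i : Fin n => (FreeGroup.of i, FreeGroup.of i))) :
      Set (FreeGroup (Fin n) × FreeGroup (Fin n))) =
    {p : FreeGroup (Fin n) × FreeGroup (Fin n) |
        PresentedGroup.mk (Set.range R) p.1 = PresentedGroup.mk (Set.range R) p.2} := by
  have hker : (PresentedGroup.mk (Set.range R)).ker = normalClosure (Set.range R) := by
    ext w
    exact PresentedGroup.mk_eq_one_iff
  have h := mihailovaSubgroup_eq_eqLocus R FreeGroup.of _ hker (FreeGroup.closure_range_of _)
  exact congrArg SetLike.coe h

/-- Mihailova's finite generation: If the finitely presented group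
`G = ⟨x₁,…,xₙ | R₁,…,Rₘ⟩` has solvable word problem, then the Mihailova subgroup
`A = {(x,y) ∈ Fₙ × Fₙ : x =_G y}` is generated by the finitely many elements
`(1,R₁),…,(1,Rₘ),(x₁,x₁),…,(xₙ,xₙ)`. -/
theorem stmt5 (n m : ℕ) (R : Fin m → FreeGroup (Fin n))
    -- G has solvable word problem:
    (hWP : Nonempty (DecidablePred fun w : FreeGroup (Fin n) =>
        PresentedGroup.mk (Set.range R) w = 1)) :
    (Subgroup.closure
        ((Set.range fun j : Fin m => ((1 : FreeGroup (Fin n)), R j)) ∪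
         (Set.range fun i : Fin n => (FreeGroup.of i, FreeGroup.of i))) :
      Set (FreeGroup (Fin n) × FreeGroup (Fin n))) =
    {p : FreeGroup (Fin n) × FreeGroup (Fin n) |
        PresentedGroup.mk (Set.range R) p.1 = PresentedGroup.mk (Set.range R) p.2} :=
  stmt5_general n m R
end

section
/- Thompson's group F has exponential growth: there is a constant C > 1 such that the growth function γ(n) with respect to the generating set {X₀, X₁} satisfies γ(n) ≥ Cⁿ for all sufficiently large n. -/
/-- Relators of the infinite presentation of Thompson's group `F`:
`Xₖ⁻¹ Xₙ Xₖ = Xₙ₊₁` for `k < n`. -/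
def thompsonFRels : Set (FreeGroup ℕ) :=
  {r | ∃ k n : ℕ, k < n ∧
    r = (FreeGroup.of k)⁻¹ * FreeGroup.of n * FreeGroup.of k * (FreeGroup.of (n + 1))⁻¹}

/-- Thompson's group `F`, via its infinite presentation. -/
def ThompsonF : Type := PresentedGroup thompsonFRels

instance : Group ThompsonF := by unfold ThompsonF; infer_instance

/-- The generator `Xᵢ` of Thompson's group `F`. -/
def ThompsonF.X (i : ℕ) : ThompsonF := PresentedGroup.of i

/-- The ball of radius `n` in a group `G` with respect to a generating set `S`:
all elements that are products of at most `n` elements of `S ∪ S⁻¹`. -/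
def ball {G : Type*} [Group G] (S : Set G) (n : ℕ) : Set G :=
  {g | ∃ w : List G, w.length ≤ n ∧ (∀ x ∈ w, x ∈ S ∨ x⁻¹ ∈ S) ∧ w.prod = g}

noncomputable section

namespace Stmt10

def gf (n : ℕ) (t : ℝ) : ℝ :=
  if t ≤ (n:ℝ) - 1 then t else if t ≤ (n:ℝ) then 2*t - n + 1 else t + 1

def gi (n : ℕ) (t : ℝ) : ℝ :=
  if t ≤ (n:ℝ) - 1 then t else if t ≤ (n:ℝ) + 1 then (t + n - 1)/2 else t - 1

def g (n : ℕ) : Equiv.Perm ℝ where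
  toFun := gf n
  invFun := gi n
  left_inv := by intro t; unfold gf gi; split_ifs <;> linarith
  right_inv := by intro t; unfold gf gi; split_ifs <;> linarith

lemma g_apply (n : ℕ) (t : ℝ) : g n t = gf n t := rfl
lemma g_inv_apply (n : ℕ) (t : ℝ) : (g n)⁻¹ t = gi n t := rfl

set_option maxHeartbeats 2000000 in
lemma g_conj {k n : ℕ} (h : k < n) : g k * g n * (g k)⁻¹ = g (n+1) := by
  have hk : (k:ℝ) + 1 ≤ (n:ℝ) := by exact_mod_cast h
  ext t
  show gf k (gf n (gi k t)) = gf (n+1) t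
  unfold gf gi
  push_cast
  split_ifs <;> linarith

def f0 (n : ℕ) : Equiv.Perm ℝ := (g n)⁻¹

lemma rels_hold : ∀ r ∈ thompsonFRels, FreeGroup.lift f0 r = 1 := by
  rintro r ⟨k, n, hkn, rfl⟩
  simp only [map_mul, map_inv, FreeGroup.lift_apply_of, f0, inv_inv]
  rw [← g_conj hkn]
  group

def φ : ThompsonF →* Equiv.Perm ℝ := PresentedGroup.toGroup rels_hold

lemma φ_X (i : ℕ) : φ (ThompsonF.X i) = (g i)⁻¹ := PresentedGroup.toGroup.of rels_hold

/-- The word element `x₀⁻¹ x₁^{ε₁} x₀⁻¹ x₁^{ε₂} ⋯`. -/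
def T : List Bool → ThompsonF
  | [] => 1
  | b :: l => (ThompsonF.X 0)⁻¹ * (cond b (ThompsonF.X 1) 1) * T l

/-- The permutation `(g j)^{-ε₁} (g (j+1))^{-ε₂} ⋯`. -/
def Q : ℕ → List Bool → Equiv.Perm ℝ
  | _, [] => 1
  | j, b :: l => (cond b (g j)⁻¹ 1) * Q (j+1) l

lemma g0_swap {j : ℕ} (hj : 1 ≤ j) : g 0 * (g j)⁻¹ = (g (j+1))⁻¹ * g 0 := by
  have h := g_conj (k := 0) (n := j) hj
  rw [← h]
  group

lemma g0_Q (l : List Bool) : ∀ j : ℕ, 1 ≤ j → g 0 * Q j l = Q (j+1) l * g 0 := by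
  induction l with
  | nil => intro j hj; simp [Q]
  | cons b t ih =>
    intro j hj
    cases b with
    | false => simpa [Q] using ih (j+1) (by omega)
    | true =>
      simp only [Q, cond]
      rw [← mul_assoc, g0_swap hj, mul_assoc, ih (j+1) (by omega), ← mul_assoc]

lemma φ_T (l : List Bool) : φ (T l) = Q 2 l * (g 0) ^ l.length := by
  induction l with
  | nil => simp [T, Q]
  | cons b t ih =>
    simp only [T, map_mul, map_inv, φ_X, inv_inv, ih, List.length_cons]
    cases b with
    | false =>
      simp only [cond, map_one, mul_one, one_mul, Q]
      rw [← mul_assoc, g0_Q t 2 (by omega), mul_assoc, ← pow_succ']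
    | true =>
      simp only [cond, φ_X, Q]
      rw [g0_swap (le_refl 1), mul_assoc ((g (1+1))⁻¹), ← mul_assoc (g 0),
        g0_Q t 2 (by omega), mul_assoc (Q (2+1) t), ← pow_succ', ← mul_assoc]

end Stmt10

namespace Stmt10

lemma Q_bound : ∀ (l : List Bool) (k j : ℕ) (p : ℝ), (j:ℝ) + 1 ≤ (k:ℝ) → (j:ℝ) ≤ p →
    (j:ℝ) ≤ Q k l p ∧ Q k l p ≤ p := by
  intro l
  induction l with
  | nil =>
    intro k j p _ hp
    have hQ : Q k ([] : List Bool) p = p := rfl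
    rw [hQ]; exact ⟨hp, le_rfl⟩
  | cons b t ih =>
    intro k j p hk hp
    have hv := ih (k+1) j p (by push_cast; linarith) hp
    cases b with
    | false =>
      simpa [Q, Equiv.Perm.mul_apply] using hv
    | true =>
      have : Q k (true :: t) p = gi k (Q (k+1) t p) := rfl
      rw [this]
      unfold gi
      split_ifs <;> constructor <;> linarith [hv.1, hv.2]

lemma Q_ne (t t' : List Bool) (j : ℕ) : Q j (true :: t) ≠ Q j (false :: t') := by
  intro hQ
  have h1 := Q_bound t (j+1) j ((j:ℝ) + 1/2) (by push_cast; linarith) (by linarith)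
  have h2 := Q_bound t' (j+1) j ((j:ℝ) + 1/2) (by push_cast; linarith) (by linarith)
  have hQp : Q j (true :: t) ((j:ℝ) + 1/2) = Q j (false :: t') ((j:ℝ) + 1/2) := by rw [hQ]
  have hL : Q j (true :: t) ((j:ℝ) + 1/2) = gi j (Q (j+1) t ((j:ℝ) + 1/2)) := rfl
  have hR : Q j (false :: t') ((j:ℝ) + 1/2) = Q (j+1) t' ((j:ℝ) + 1/2) := by
    simp [Q, Equiv.Perm.mul_apply]
  rw [hL, hR] at hQp
  unfold gi at hQp
  split_ifs at hQp <;> linarith [h1.1, h1.2, h2.1, h2.2]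

lemma Q_inj : ∀ (l l' : List Bool), l.length = l'.length → ∀ j : ℕ,
    Q j l = Q j l' → l = l' := by
  intro l
  induction l with
  | nil =>
    intro l' hlen _ _
    cases l' with
    | nil => rfl
    | cons b' t' => simp at hlen
  | cons b t ih =>
    intro l' hlen j hQ
    cases l' with
    | nil => simp at hlen
    | cons b' t' =>
      have hlen' : t.length = t'.length := by simpa using hlen
      cases b <;> cases b'
      · have h' : Q (j+1) t = Q (j+1) t' := by
          simpa [Q] using hQ
        rw [ih t' hlen' (j+1) h']
      · exact absurd hQ.symm (Q_ne t' t j)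
      · exact absurd hQ (Q_ne t t' j)
      · have h' : Q (j+1) t = Q (j+1) t' := by
          simp only [Q, cond] at hQ
          exact mul_left_cancel hQ
        rw [ih t' hlen' (j+1) h']

lemma T_inj {l l' : List Bool} (h : l.length = l'.length) (hT : T l = T l') : l = l' := by
  have h1 := congrArg φ hT
  rw [φ_T, φ_T, h] at h1
  exact Q_inj l l' h 2 (mul_right_cancel h1)

def S : Set ThompsonF := {ThompsonF.X 0, ThompsonF.X 1}

lemma T_word (l : List Bool) : ∃ w : List ThompsonF, w.length ≤ 2 * l.length ∧
    (∀ x ∈ w, x ∈ S ∨ x⁻¹ ∈ S) ∧ w.prod = T l := by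
  induction l with
  | nil => exact ⟨[], by simp, by simp, by simp [T]⟩
  | cons b t ih =>
    obtain ⟨w, hw1, hw2, hw3⟩ := ih
    refine ⟨(ThompsonF.X 0)⁻¹ :: ((cond b [ThompsonF.X 1] []) ++ w), ?_, ?_, ?_⟩
    · cases b <;> simp [List.length_append] <;> omega
    · intro x hx
      rcases List.mem_cons.1 hx with h | h
      · right; rw [h, inv_inv]; left; rfl
      · rcases List.mem_append.1 h with h | h
        · cases b <;> simp at h
          left; rw [h]; right; rfl
        · exact hw2 x h
    · cases b <;> simp [T, hw3, mul_assoc]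

lemma T_mem (l : List Bool) (n : ℕ) (h : 2 * l.length ≤ n) : T l ∈ ball S n := by
  obtain ⟨w, hw1, hw2, hw3⟩ := T_word l
  exact ⟨w, le_trans hw1 h, hw2, hw3⟩

lemma ball_finite (n : ℕ) : (ball S n).Finite := by
  classical
  set A : Set ThompsonF := {x | x ∈ S ∨ x⁻¹ ∈ S} with hA
  have hAfin : A.Finite := by
    have hsub : A ⊆ {ThompsonF.X 0, ThompsonF.X 1, (ThompsonF.X 0)⁻¹, (ThompsonF.X 1)⁻¹} := by
      intro x hx
      rcases hx with hx | hx
      · rcases hx with hx | hx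
        · left; exact hx
        · right; left; exact hx
      · rcases hx with hx | hx
        · right; right; left; rw [← hx, inv_inv]
        · right; right; right
          rw [show x = ((ThompsonF.X 1)⁻¹) from by rw [← hx, inv_inv]]
          rfl
    exact Set.Finite.subset ((((Set.finite_singleton _).insert _).insert _).insert _) hsub
  have : Finite ↥A := hAfin.to_subtype
  have hLists : {w : List ↥A | w.length ≤ n}.Finite := List.finite_length_le ↥A n
  apply Set.Finite.subset (hLists.image (fun w => (w.map Subtype.val).prod))
  rintro x ⟨w, hlen, hmem, rfl⟩
  refine ⟨w.attach.map (fun y => (⟨y.1, hmem y.1 y.2⟩ : ↥A)), by simpa using hlen, ?_⟩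
  simp only [List.map_map]
  have : (Subtype.val ∘ fun y : {x // x ∈ w} => (⟨y.1, hmem y.1 y.2⟩ : ↥A)) =
      fun y : {x // x ∈ w} => y.1 := rfl
  rw [this, List.attach_map_subtype_val]

end Stmt10

open Stmt10 in
/-- Thompson's group `F` has exponential growth: there is `C > 1` such that the
growth function `γ(n)` with respect to the generating set `{X₀, X₁}` satisfies `γ(n) ≥ Cⁿ`
for all sufficiently large `n`. -/
theorem stmt10 :
    ∃ C : ℝ, 1 < C ∧ ∃ N : ℕ, ∀ n ≥ N,
      C ^ n ≤ ((ball ({ThompsonF.X 0, ThompsonF.X 1} : Set ThompsonF) n).ncard : ℝ) := by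
  refine ⟨(2:ℝ) ^ ((4:ℝ)⁻¹), ?_, 2, ?_⟩
  · exact (Real.one_lt_rpow_iff_of_pos (by norm_num)).mpr (Or.inl ⟨one_lt_two, by norm_num⟩)
  · intro n hn
    set m := n / 2 with hm
    have h2m : 2 * m ≤ n := by omega
    have hm1 : 1 ≤ m := by omega
    have hn4 : n ≤ 4 * m := by omega
    have hinj : Function.Injective (fun v : Fin m → Bool => T (List.ofFn v)) := by
      intro v v' h
      exact List.ofFn_injective (T_inj (by simp) h)
    have hsub : Set.range (fun v : Fin m → Bool => T (List.ofFn v)) ⊆ ball S n := by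
      rintro x ⟨v, rfl⟩
      exact T_mem _ n (by simpa using h2m)
    have hcard : (Set.range (fun v : Fin m → Bool => T (List.ofFn v))).ncard = 2 ^ m := by
      rw [← Set.image_univ, Set.ncard_image_of_injective _ hinj, Set.ncard_univ]
      simp [Nat.card_eq_fintype_card]
    have hle : (2:ℕ) ^ m ≤ (ball S n).ncard := by
      rw [← hcard]
      exact Set.ncard_le_ncard hsub (ball_finite n)
    have hrw : ((2:ℝ) ^ ((4:ℝ)⁻¹)) ^ n = (2:ℝ) ^ ((4:ℝ)⁻¹ * n) := by
      rw [← Real.rpow_natCast ((2:ℝ) ^ ((4:ℝ)⁻¹)) n, ← Real.rpow_mul (by norm_num)]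
    rw [hrw]
    have h1 : (2:ℝ) ^ ((4:ℝ)⁻¹ * n) ≤ (2:ℝ) ^ ((m:ℕ):ℝ) := by
      apply Real.rpow_le_rpow_of_exponent_le one_le_two
      have : (n:ℝ) ≤ 4 * m := by exact_mod_cast hn4
      linarith
    have h2 : (2:ℝ) ^ ((m:ℕ):ℝ) = (((2:ℕ) ^ m : ℕ) : ℝ) := by
      rw [Real.rpow_natCast]; push_cast; ring
    calc (2:ℝ) ^ ((4:ℝ)⁻¹ * n) ≤ (2:ℝ) ^ ((m:ℕ):ℝ) := h1
      _ = (((2:ℕ) ^ m : ℕ) : ℝ) := h2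
      _ ≤ _ := by exact_mod_cast hle
end
end

section
/- Distinct tuples (ε₁,…,εₙ) ∈ ℕⁿ with each εᵢ ≥ 1 yield distinct elements X₁^{ε₁} X₂^{ε₂} ⋯ Xₙ^{εₙ} X₀^{-(n-1)} of Thompson's group F (these are normal forms). -/
namespace TF

abbrev C := ℕ → Bool

def cns (b : Bool) (s : C) : C := fun n => match n with | 0 => b | Nat.succ k => s k

def tl (s : C) : C := fun n => s (n + 1)

@[simp] lemma cns_zero (b : Bool) (s : C) : cns b s 0 = b := rfl
@[simp] lemma cns_succ (b : Bool) (s : C) (k : ℕ) : cns b s (k+1) = s k := rfl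
@[simp] lemma tl_cns (b : Bool) (s : C) : tl (cns b s) = s := rfl
@[simp] lemma tl_apply (s : C) (k : ℕ) : tl s k = s (k+1) := rfl

lemma cns_eta (s : C) : cns (s 0) (tl s) = s := by
  funext k; cases k <;> rfl

lemma cns_eta' {b : Bool} {s : C} (h : s 0 = b) : cns b (tl s) = s := by
  rw [← h]; exact cns_eta s

def A (s : C) : C :=
  if s 0 then (if s 1 then tl s else cns false (cns true (tl (tl s)))) else cns false s

def B (s : C) : C :=
  if s 0 then cns true s else (if s 1 then cns true (cns false (tl (tl s))) else tl s)

lemma A_ff {s : C} (h0 : s 0 = false) : A s = cns false s := by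
  unfold A; simp [h0]
lemma A_tf {s : C} (h0 : s 0 = true) (h1 : s 1 = false) :
    A s = cns false (cns true (tl (tl s))) := by unfold A; simp [h0, h1]
lemma A_tt {s : C} (h0 : s 0 = true) (h1 : s 1 = true) : A s = tl s := by
  unfold A; simp [h0, h1]

lemma B_t {s : C} (h0 : s 0 = true) : B s = cns true s := by unfold B; simp [h0]
lemma B_ft {s : C} (h0 : s 0 = false) (h1 : s 1 = true) :
    B s = cns true (cns false (tl (tl s))) := by unfold B; simp [h0, h1]
lemma B_ff {s : C} (h0 : s 0 = false) (h1 : s 1 = false) : B s = tl s := by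
  unfold B; simp [h0, h1]

lemma two_tail {b c : Bool} {s : C} (h0 : s 0 = b) (h1 : s 1 = c) :
    cns b (cns c (tl (tl s))) = s := by
  funext k
  match k with
  | 0 => simp [h0]
  | 1 => simp [h1]
  | Nat.succ (Nat.succ m) => rfl

lemma BA (s : C) : B (A s) = s := by
  by_cases h0 : s 0 = true
  · by_cases h1 : s 1 = true
    · rw [A_tt h0 h1, B_t (by simp [h0, h1]), cns_eta' h0]
    · simp only [Bool.not_eq_true] at h1
      rw [A_tf h0 h1, B_ft (by simp) (by simp)]
      simp only [tl_cns]
      exact two_tail h0 h1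
  · simp only [Bool.not_eq_true] at h0
    rw [A_ff h0, B_ff (by simp) (by simp [h0]), tl_cns]

lemma AB (s : C) : A (B s) = s := by
  by_cases h0 : s 0 = true
  · rw [B_t h0, A_tt (by simp) (by simp [h0]), tl_cns]
  · simp only [Bool.not_eq_true] at h0
    by_cases h1 : s 1 = true
    · rw [B_ft h0 h1, A_tf (by simp) (by simp)]
      simp only [tl_cns]
      exact two_tail h0 h1
    · simp only [Bool.not_eq_true] at h1
      rw [B_ff h0 h1, A_ff (by simp [h1]), cns_eta' h0]

def x0 : Equiv.Perm C := ⟨A, B, BA, AB⟩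

@[simp] lemma x0_apply (s : C) : x0 s = A s := rfl

def phi (f : C → C) (s : C) : C := if s 0 then cns true (f (tl s)) else s

lemma phi_t (f : C → C) {s : C} (h0 : s 0 = true) : phi f s = cns true (f (tl s)) := by
  unfold phi; simp [h0]
lemma phi_f (f : C → C) {s : C} (h0 : s 0 = false) : phi f s = s := by
  unfold phi; simp [h0]

lemma phi_comp (f g : C → C) (s : C) : phi f (phi g s) = phi (f ∘ g) s := by
  by_cases h0 : s 0 = true
  · calc phi f (phi g s) = phi f (cns true (g (tl s))) := by rw [phi_t g h0]
      _ = cns true (f (g (tl s))) := by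
            rw [phi_t (s := cns true (g (tl s))) f (by simp), tl_cns]
      _ = phi (f ∘ g) s := by rw [phi_t (f ∘ g) h0]; rfl
  · simp only [Bool.not_eq_true] at h0
    rw [phi_f g h0, phi_f f h0, phi_f _ h0]

lemma phi_id (s : C) : phi id s = s := by
  by_cases h0 : s 0 = true
  · rw [phi_t id h0]; exact cns_eta' h0
  · simp only [Bool.not_eq_true] at h0; exact phi_f id h0

def PhiE (e : Equiv.Perm C) : Equiv.Perm C :=
  ⟨phi e, phi e.symm, fun s => by
      rw [phi_comp]
      have : (⇑e.symm ∘ ⇑e) = id := by funext t; simp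
      rw [this, phi_id],
   fun s => by
      rw [phi_comp]
      have : (⇑e ∘ ⇑e.symm) = id := by funext t; simp
      rw [this, phi_id]⟩

@[simp] lemma PhiE_apply (e : Equiv.Perm C) (s : C) : PhiE e s = phi e s := rfl

def Phi : Equiv.Perm C →* Equiv.Perm C where
  toFun := PhiE
  map_one' := Equiv.ext fun s => by
    simpa using phi_id s
  map_mul' := fun f g => Equiv.ext fun s => by
    simp only [PhiE_apply, Equiv.Perm.coe_mul, Function.comp_apply]
    rw [phi_comp]

@[simp] lemma Phi_apply (e : Equiv.Perm C) (s : C) : Phi e s = phi e s := rfl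

lemma Phi_injective : Function.Injective Phi := by
  intro f g h
  refine Equiv.ext fun t => ?_
  have h1 : Phi f (cns true t) = Phi g (cns true t) := by rw [h]
  rw [Phi_apply, Phi_apply, phi_t _ (by simp), phi_t _ (by simp), tl_cns] at h1
  have h2 := congrArg tl h1
  simp only [tl_cns] at h2
  exact h2

def x : ℕ → Equiv.Perm C
  | 0 => x0
  | Nat.succ n => Phi (x n)

lemma base_rel (g : Equiv.Perm C) : x0⁻¹ * Phi g * x0 = Phi (Phi g) := by
  have key : Phi g * x0 = x0 * Phi (Phi g) := by
    refine Equiv.ext fun s => ?_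
    simp only [Equiv.Perm.coe_mul, Function.comp_apply, Phi_apply, x0_apply]
    have hc : ⇑(Phi g) = phi ⇑g := rfl
    rw [hc]
    by_cases h0 : s 0 = true
    · by_cases h1 : s 1 = true
      · rw [A_tt h0 h1, phi_t _ (by simp [h1]), phi_t _ h0, phi_t _ (by simp [h1]),
          A_tt (by simp) (by simp), tl_cns]
      · simp only [Bool.not_eq_true] at h1
        rw [A_tf h0 h1, phi_f _ (by simp), phi_t _ h0, phi_f _ (by simp [h1]),
          cns_eta' h0, A_tf h0 h1]
    · simp only [Bool.not_eq_true] at h0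
      rw [A_ff h0, phi_f _ (by simp), phi_f _ h0, A_ff h0]
  rw [mul_assoc, key, ← mul_assoc, inv_mul_cancel, one_mul]

lemma rel_x : ∀ k d : ℕ, (x k)⁻¹ * x (k + d + 1) * x k = x (k + d + 2) := by
  intro k
  induction k with
  | zero =>
    intro d
    simp only [Nat.zero_add]
    show x0⁻¹ * Phi (x d) * x0 = Phi (x (d + 1))
    rw [base_rel]; rfl
  | succ k ih =>
    intro d
    have e1 : k + 1 + d + 1 = (k + d + 1) + 1 := by omega
    have e2 : k + 1 + d + 2 = (k + d + 2) + 1 := by omega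
    rw [e1, e2]
    show (Phi (x k))⁻¹ * Phi (x (k + d + 1)) * Phi (x k) = Phi (x (k + d + 2))
    rw [← map_inv, ← map_mul, ← map_mul, ih d]

lemma rel_x' {k n : ℕ} (h : k < n) : (x k)⁻¹ * x n * x k = x (n + 1) := by
  obtain ⟨d, rfl⟩ : ∃ d, n = k + d + 1 := ⟨n - k - 1, by omega⟩
  exact rel_x k d

def theta : ThompsonF →* Equiv.Perm C :=
  PresentedGroup.toGroup (f := x) (by
    rintro r ⟨k, n, hkn, rfl⟩
    simp only [map_mul, map_inv, FreeGroup.lift_apply_of]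
    rw [mul_inv_eq_one]
    exact rel_x' hkn)

lemma theta_X (i : ℕ) : theta (ThompsonF.X i) = x i :=
  PresentedGroup.toGroup.of _

def Q : (n : ℕ) → (Fin n → ℕ) → Equiv.Perm C
  | 0, _ => 1
  | Nat.succ n, ε => x0 ^ (ε 0) * Phi (Q n (fun i => ε i.succ))

lemma prod_eq_Q : ∀ (n : ℕ) (ε : Fin n → ℕ),
    (List.ofFn fun i : Fin n => x (i.1 + 1) ^ ε i).prod = Phi (Q n ε) := by
  intro n
  induction n with
  | zero => intro ε; simp [Q]
  | succ n ih =>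
    intro ε
    rw [List.ofFn_succ, List.prod_cons]
    have hfun : (fun i : Fin n => x (i.succ.1 + 1) ^ ε i.succ)
        = ⇑Phi ∘ (fun i : Fin n => x (i.1 + 1) ^ ε i.succ) := by
      funext i
      show x (i.1 + 2) ^ ε i.succ = Phi (x (i.1 + 1) ^ ε i.succ)
      rw [map_pow]
      rfl
    rw [hfun, ← List.map_ofFn, ← map_list_prod, ih (fun i => ε i.succ)]
    show x 1 ^ ε 0 * Phi (Phi (Q n fun i => ε i.succ)) = Phi (Q (n+1) ε)
    rw [show Q (n+1) ε = x0 ^ (ε 0) * Phi (Q n (fun i => ε i.succ)) from rfl,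
      map_mul, map_pow]
    rfl

def zros (m : ℕ) (u : C) : C := fun k => if k < m then false else u (k - m)

lemma x0_zros (m : ℕ) (u : C) : x0 (zros (m+1) u) = zros (m+2) u := by
  rw [x0_apply, A_ff (by simp [zros])]
  funext k
  match k with
  | 0 => simp [zros]
  | Nat.succ j =>
    show zros (m+1) u j = zros (m+2) u (j+1)
    simp only [zros]
    by_cases h : j < m + 1
    · simp [h, Nat.succ_lt_succ h]
    · have h' : ¬ (j + 1 < m + 2) := by omega
      simp only [h, h', if_false]
      congr 1
      omega

lemma x0_pow_zros : ∀ (a m : ℕ) (u : C), (x0 ^ a) (zros (m+1) u) = zros (m+1+a) u := by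
  intro a
  induction a with
  | zero => intro m u; simp
  | succ a ih =>
    intro m u
    rw [pow_succ', Equiv.Perm.mul_apply, ih, show m+1+a = (m+a)+1 from by omega, x0_zros,
      show m+1+(a+1) = (m+a)+2 from by omega]

def ones : C := fun _ => true

lemma phi_zros (f : C → C) (m : ℕ) (u : C) : phi f (zros (m+1) u) = zros (m+1) u :=
  phi_f f (by simp [zros])

lemma zros_inj {a a' : ℕ} (h : zros (a+1) ones = zros (a'+1) ones) : a = a' := by
  by_contra hne
  rcases Nat.lt_or_ge a a' with hl | hg
  · have := congrFun h (a+1)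
    simp only [zros, ones] at this
    have h1 : ¬ (a + 1 < a + 1) := by omega
    have h2 : a + 1 < a' + 1 := by omega
    simp [h1, h2] at this
  · have hl : a' < a := by omega
    have := congrFun h (a'+1)
    simp only [zros, ones] at this
    have h1 : ¬ (a' + 1 < a' + 1) := by omega
    have h2 : a' + 1 < a + 1 := by omega
    simp [h1, h2] at this

lemma Q_inj : ∀ (n : ℕ) (ε ε' : Fin n → ℕ), (∀ i, 1 ≤ ε i) → (∀ i, 1 ≤ ε' i) →
    Q n ε = Q n ε' → ε = ε' := by
  intro n
  induction n with
  | zero => intro ε ε' _ _ _; funext i; exact absurd i.2 (by omega)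
  | succ n ih =>
    intro ε ε' hε hε' h
    have hQ : x0 ^ (ε 0) * Phi (Q n (fun i => ε i.succ))
        = x0 ^ (ε' 0) * Phi (Q n (fun i => ε' i.succ)) := h
    have hpt : (x0 ^ (ε 0) * Phi (Q n (fun i => ε i.succ))) (zros 1 ones)
        = (x0 ^ (ε' 0) * Phi (Q n (fun i => ε' i.succ))) (zros 1 ones) := by rw [hQ]
    rw [Equiv.Perm.mul_apply, Equiv.Perm.mul_apply] at hpt
    have e1 : (Phi (Q n (fun i => ε i.succ))) (zros 1 ones) = zros 1 ones := by
      show phi (⇑(Q n (fun i => ε i.succ))) (zros (0+1) ones) = zros (0+1) ones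
      exact phi_zros _ 0 ones
    have e2 : (Phi (Q n (fun i => ε' i.succ))) (zros 1 ones) = zros 1 ones := by
      show phi (⇑(Q n (fun i => ε' i.succ))) (zros (0+1) ones) = zros (0+1) ones
      exact phi_zros _ 0 ones
    rw [e1, e2] at hpt
    have p1 : (x0 ^ ε 0) (zros 1 ones) = zros (0 + 1 + ε 0) ones := x0_pow_zros (ε 0) 0 ones
    have p2 : (x0 ^ ε' 0) (zros 1 ones) = zros (0 + 1 + ε' 0) ones := x0_pow_zros (ε' 0) 0 ones
    rw [p1, p2] at hpt
    have h00 : ε 0 = ε' 0 := by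
      have h' := hpt
      rw [show 0 + 1 + ε 0 = ε 0 + 1 from by omega,
        show 0 + 1 + ε' 0 = ε' 0 + 1 from by omega] at h'
      exact zros_inj h'
    have hQ' := hQ
    rw [← h00] at hQ'
    have hQ2 := mul_left_cancel hQ'
    have htail := ih _ _ (fun i => hε i.succ) (fun i => hε' i.succ) (Phi_injective hQ2)
    funext i
    refine Fin.cases ?_ ?_ i
    · exact h00
    · intro j; exact congrFun htail j

end TF

/-- Distinct tuples `(ε₁,…,εₙ) ∈ ℕⁿ` with each `εᵢ ≥ 1` yield distinct elements
`X₁^{ε₁} X₂^{ε₂} ⋯ Xₙ^{εₙ} X₀^{-(n-1)}` of Thompson's group `F` (normal forms). -/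
theorem stmt12 (n : ℕ) (ε ε' : Fin n → ℕ)
    (hε : ∀ i, 1 ≤ ε i) (hε' : ∀ i, 1 ≤ ε' i)
    (h : (List.ofFn fun i : Fin n => ThompsonF.X (i.1 + 1) ^ ε i).prod
          * ((ThompsonF.X 0)⁻¹) ^ (n - 1)
        = (List.ofFn fun i : Fin n => ThompsonF.X (i.1 + 1) ^ ε' i).prod
          * ((ThompsonF.X 0)⁻¹) ^ (n - 1)) :
    ε = ε' := by
  have hmap := congrArg TF.theta h
  simp only [map_mul, map_pow, map_inv, map_list_prod, List.map_ofFn] at hmap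
  have hx : ∀ (δ : Fin n → ℕ),
      List.ofFn (⇑TF.theta ∘ fun i : Fin n => ThompsonF.X (i.1 + 1) ^ δ i)
      = List.ofFn fun i : Fin n => TF.x (i.1 + 1) ^ δ i := by
    intro δ
    congr 1
    funext i
    simp [Function.comp, map_pow, TF.theta_X]
  rw [hx ε, hx ε'] at hmap
  rw [TF.theta_X] at hmap
  have hprod := mul_right_cancel hmap
  rw [TF.prod_eq_Q, TF.prod_eq_Q] at hprod
  exact TF.Q_inj n ε ε' hε hε' (TF.Phi_injective hprod)
end
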